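/- Fix ρ ∈ (0,1) and define W_ρ on the closed unit disk by W_ρ(ξ₁,ξ₂) = 4√(4ρ(ρ(ξ₁²+ξ₂²)+ξ₁)+1) · (1−ξ₁²−ξ₂²)² / ( (ρ²(ξ₁²+ξ₂²)−2ρξ₁+1)² · √(1+2(ξ₁²+ξ₂²)) ). Then W_ρ attains its global maximum over the closed unit disk at the point (ρ,0) and only there: W_ρ(ξ) < W_ρ(ρ,0) for every ξ in the closed unit disk with ξ ≠ (ρ,0); and W_ρ(ρ,0) = 4(ρ²−1)²√(4ρ(ρ³+ρ)+1) / ( √(2ρ²+1) · (ρ⁴−2ρ²+1)² ). -/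

import Mathlib

/-!
Since `4ρ(ρ|ξ|² + Re ξ) + 1 = |1 + 2ρξ|²` and `ρ²|ξ|² - 2ρ Re ξ + 1 = |1 - ρξ|²`,
`W_ρ(ξ) = 4 |1 + 2ρξ| (1 - |ξ|²)² / (|1 - ρξ|⁴ √(1 + 2|ξ|²))`. On the circle `|ξ| = u` the
triangle inequality makes this largest at `ξ = u`, strictly so unless `ξ ≥ 0`. What is left is the
one-variable inequality `F(u) < F(ρ)` for the radial profile `F`; after squaring and clearing
denominators, the difference of the two sides factors as `(u - ρ)²` times a polynomial
whose positivity for `0 ≤ u ≤ 1`, `0 < ρ < 1` follows by completing squares.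
-/

noncomputable section

open Metric

/-- The function `W_ρ` on the closed unit disk (identifying `ℝ²` with `ℂ`). -/
def Wfun (ρ : ℝ) (ξ : ℂ) : ℝ :=
  4 * Real.sqrt (4 * ρ * (ρ * (ξ.re ^ 2 + ξ.im ^ 2) + ξ.re) + 1) *
      (1 - ξ.re ^ 2 - ξ.im ^ 2) ^ 2 /
    ((ρ ^ 2 * (ξ.re ^ 2 + ξ.im ^ 2) - 2 * ρ * ξ.re + 1) ^ 2 *
      Real.sqrt (1 + 2 * (ξ.re ^ 2 + ξ.im ^ 2)))

open scoped ComplexOrder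

namespace Complex

lemma sq_norm_one_add (w : ℂ) : ‖1 + w‖ ^ 2 = 1 + 2 * w.re + ‖w‖ ^ 2 := by
  simp only [Complex.sq_norm, normSq_apply, add_re, add_im, one_re, one_im]
  ring

lemma norm_one_add_mul_lt_of_not_nonneg {c : ℝ} {w : ℂ} (hc : 0 < c) (hw : ¬0 ≤ w) :
    ‖1 + c * w‖ < 1 + c * ‖w‖ := by
  have hre : w.re < ‖w‖ := (re_le_norm w).lt_of_ne (mt re_eq_norm.1 hw)
  refine lt_of_pow_lt_pow_left₀ 2 (by positivity) ?_
  rw [sq_norm_one_add, re_ofReal_mul, norm_mul, norm_real, Real.norm_of_nonneg hc.le]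
  nlinarith

end Complex

lemma Wfun_eq_norm (ρ : ℝ) (ξ : ℂ) :
    Wfun ρ ξ = 4 * ‖1 + 2 * (ρ : ℂ) * ξ‖ * (1 - ‖ξ‖ ^ 2) ^ 2 /
      (‖1 - (ρ : ℂ) * ξ‖ ^ 4 * √(1 + 2 * ‖ξ‖ ^ 2)) := by
  have hnum : ‖1 + 2 * (ρ : ℂ) * ξ‖ = √(4 * ρ * (ρ * (ξ.re ^ 2 + ξ.im ^ 2) + ξ.re) + 1) := by
    rw [← Real.sqrt_sq (norm_nonneg _), Complex.sq_norm, Complex.normSq_apply]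
    congr 1
    simp only [Complex.add_re, Complex.one_re, Complex.mul_re, Complex.re_ofNat, Complex.ofReal_re,
      Complex.im_ofNat, Complex.ofReal_im, mul_zero, sub_zero, Complex.mul_im, zero_mul, add_zero,
      Complex.add_im, Complex.one_im, zero_add]
    ring
  have hden : ‖1 - (ρ : ℂ) * ξ‖ ^ 4 = (ρ ^ 2 * (ξ.re ^ 2 + ξ.im ^ 2) - 2 * ρ * ξ.re + 1) ^ 2 := by
    rw [show 4 = 2 * 2 from rfl, pow_mul, Complex.sq_norm, Complex.normSq_apply]
    simp only [Complex.sub_re, Complex.one_re, Complex.mul_re, Complex.ofReal_re, Complex.ofReal_im,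
      zero_mul, sub_zero, Complex.sub_im, Complex.one_im, Complex.mul_im, add_zero, zero_sub]
    ring
  have hξ : ‖ξ‖ ^ 2 = ξ.re ^ 2 + ξ.im ^ 2 := by
    rw [Complex.sq_norm, Complex.normSq_apply]
    ring
  rw [Wfun, hnum, hden, hξ]
  ring

/-- The value of `W_ρ` at the nonnegative real point `u`. -/
def radialProfile (ρ u : ℝ) : ℝ :=
  4 * (1 + 2 * ρ * u) * (1 - u ^ 2) ^ 2 / ((1 - ρ * u) ^ 4 * √(1 + 2 * u ^ 2))

lemma Wfun_ofReal {ρ u : ℝ} (hρ : 0 ≤ ρ) (hu : 0 ≤ u) (hρu : ρ * u ≤ 1) :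
    Wfun ρ u = radialProfile ρ u := by
  have hnum : (1 + 2 * (ρ : ℂ) * u) = ((1 + 2 * ρ * u : ℝ) : ℂ) := by push_cast; ring
  have hden : (1 - (ρ : ℂ) * u) = ((1 - ρ * u : ℝ) : ℂ) := by push_cast; ring
  rw [Wfun_eq_norm, hnum, hden, Complex.norm_of_nonneg hu,
    Complex.norm_of_nonneg (by positivity : 0 ≤ 1 + 2 * ρ * u),
    Complex.norm_of_nonneg (by linarith : 0 ≤ 1 - ρ * u), radialProfile]

lemma Wfun_le_radialProfile {ρ : ℝ} {ξ : ℂ} (hρ : 0 ≤ ρ) (hρξ : ρ * ‖ξ‖ < 1) :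
    Wfun ρ ξ ≤ radialProfile ρ ‖ξ‖ := by
  have hnum : ‖1 + 2 * (ρ : ℂ) * ξ‖ ≤ 1 + 2 * ρ * ‖ξ‖ := by
    simpa [norm_mul, abs_of_nonneg hρ] using norm_add_le (1 : ℂ) (2 * ρ * ξ)
  have hden : 1 - ρ * ‖ξ‖ ≤ ‖1 - (ρ : ℂ) * ξ‖ := by
    simpa [norm_mul, abs_of_nonneg hρ] using norm_sub_norm_le (1 : ℂ) (ρ * ξ)
  have hpos : 0 < 1 - ρ * ‖ξ‖ := by linarith
  rw [Wfun_eq_norm, radialProfile]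
  gcongr

lemma Wfun_lt_radialProfile {ρ : ℝ} {ξ : ℂ} (hρ : 0 < ρ) (hρξ : ρ * ‖ξ‖ < 1) (hξ1 : ‖ξ‖ < 1)
    (hξ : ¬0 ≤ ξ) : Wfun ρ ξ < radialProfile ρ ‖ξ‖ := by
  have hnum : ‖1 + 2 * (ρ : ℂ) * ξ‖ < 1 + 2 * ρ * ‖ξ‖ := by
    simpa using Complex.norm_one_add_mul_lt_of_not_nonneg (by positivity : 0 < 2 * ρ) hξ
  have hden : 1 - ρ * ‖ξ‖ ≤ ‖1 - (ρ : ℂ) * ξ‖ := by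
    simpa [norm_mul, abs_of_pos hρ] using norm_sub_norm_le (1 : ℂ) (ρ * ξ)
  have hpos : 0 < ‖1 - (ρ : ℂ) * ξ‖ := by linarith
  have hξ2 : 0 < 1 - ‖ξ‖ ^ 2 := by nlinarith [norm_nonneg ξ]
  calc Wfun ρ ξ = _ := Wfun_eq_norm ρ ξ
    _ < 4 * (1 + 2 * ρ * ‖ξ‖) * (1 - ‖ξ‖ ^ 2) ^ 2 /
        (‖1 - (ρ : ℂ) * ξ‖ ^ 4 * √(1 + 2 * ‖ξ‖ ^ 2)) := by gcongr
    _ ≤ radialProfile ρ ‖ξ‖ := by rw [radialProfile]; gcongr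

def gapQuadratic (p S T : ℝ) : ℝ :=
  (6 + 32 * p + 76 * p ^ 2 + 120 * p ^ 3 + 118 * p ^ 4 + 56 * p ^ 5 + 24 * p ^ 6)
    - (4 + 20 * p + 36 * p ^ 2 + 32 * p ^ 3 + 16 * p ^ 4) * (S + T)
    + (1 + 2 * p) ^ 2 * (S ^ 2 + S * T + T ^ 2)

lemma gapQuadratic_pos {p : ℝ} (S T : ℝ) (hp0 : 0 ≤ p) (hp1 : p < 1) :
    0 < gapQuadratic p S T := by
  set B := 4 + 20 * p + 36 * p ^ 2 + 32 * p ^ 3 + 16 * p ^ 4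
  set C := (1 + 2 * p) ^ 2
  have hsq : 12 * C * gapQuadratic p S T =
      3 * (2 * C * S + C * T - B) ^ 2 + (3 * C * T - B) ^ 2 + 8 * (1 - p) ^ 4 * (1 + 2 * p) ^ 4 := by
    simp only [gapQuadratic, B, C]
    ring
  have hp : 0 < 1 - p := sub_pos.2 hp1
  refine pos_of_mul_pos_right (a := 12 * C) ?_ (by positivity)
  rw [hsq]
  positivity

lemma radialProfile_sq_cleared_lt {r u : ℝ} (hr0 : 0 < r) (hr1 : r < 1) (hu0 : 0 ≤ u) (hu1 : u ≤ 1)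
    (hne : u ≠ r) :
    (1 + 2 * r * u) ^ 2 * (1 - u ^ 2) ^ 4 * (1 - r ^ 2) ^ 4 <
      (1 + 2 * r ^ 2) * (1 + 2 * u ^ 2) * (1 - r * u) ^ 8 := by
  have hgap : (1 + 2 * r ^ 2) * (1 + 2 * u ^ 2) * (1 - r * u) ^ 8
      - (1 + 2 * r * u) ^ 2 * (1 - u ^ 2) ^ 4 * (1 - r ^ 2) ^ 4 =
      (u - r) ^ 2 * ((1 - u ^ 2) * (1 - r ^ 2) * gapQuadratic (r * u) ((u + r) ^ 2) ((1 + r * u) ^ 2)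
        + 3 * (1 - r * u) ^ 6 * (1 + 2 * (r * u) ^ 2)) := by
    simp only [gapQuadratic]
    ring
  have hru : r * u < 1 := by nlinarith
  have hG := gapQuadratic_pos ((u + r) ^ 2) ((1 + r * u) ^ 2) (by positivity) hru
  have hu2 : 0 ≤ 1 - u ^ 2 := by nlinarith
  have hr2 : 0 ≤ 1 - r ^ 2 := by nlinarith
  have hcof : 0 < (1 - u ^ 2) * (1 - r ^ 2) * gapQuadratic (r * u) ((u + r) ^ 2) ((1 + r * u) ^ 2)
      + 3 * (1 - r * u) ^ 6 * (1 + 2 * (r * u) ^ 2) :=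
    add_pos_of_nonneg_of_pos (by positivity) (by have := sub_pos.2 hru; positivity)
  have hsq : 0 < (u - r) ^ 2 := sq_pos_iff.2 (sub_ne_zero.2 hne)
  nlinarith [mul_pos hsq hcof]

lemma radialProfile_self {ρ : ℝ} (hρ : ρ ^ 2 ≠ 1) :
    radialProfile ρ ρ = 4 * √(1 + 2 * ρ ^ 2) / (1 - ρ ^ 2) ^ 2 := by
  have hρ' : 1 - ρ ^ 2 ≠ 0 := sub_ne_zero.2 hρ.symm
  rw [radialProfile]
  field_simp
  rw [Real.sq_sqrt (by positivity)]

lemma radialProfile_lt_self {ρ u : ℝ} (hρ0 : 0 < ρ) (hρ1 : ρ < 1) (hu0 : 0 ≤ u) (hu1 : u ≤ 1)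
    (hne : u ≠ ρ) : radialProfile ρ u < radialProfile ρ ρ := by
  have hρu : 0 < 1 - ρ * u := by nlinarith
  have hρ2 : ρ ^ 2 < 1 := by nlinarith
  have hsρ : √(1 + 2 * ρ ^ 2) ^ 2 = 1 + 2 * ρ ^ 2 := Real.sq_sqrt (by positivity)
  have hsu : √(1 + 2 * u ^ 2) ^ 2 = 1 + 2 * u ^ 2 := Real.sq_sqrt (by positivity)
  rw [radialProfile_self hρ2.ne, radialProfile,
    div_lt_div_iff₀ (by positivity) (by nlinarith [sq_nonneg (1 - ρ ^ 2)])]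
  refine lt_of_pow_lt_pow_left₀ 2 (by positivity) ?_
  calc (4 * (1 + 2 * ρ * u) * (1 - u ^ 2) ^ 2 * (1 - ρ ^ 2) ^ 2) ^ 2
      = 16 * ((1 + 2 * ρ * u) ^ 2 * (1 - u ^ 2) ^ 4 * (1 - ρ ^ 2) ^ 4) := by ring
    _ < 16 * ((1 + 2 * ρ ^ 2) * (1 + 2 * u ^ 2) * (1 - ρ * u) ^ 8) := by
      linarith [radialProfile_sq_cleared_lt hρ0 hρ1 hu0 hu1 hne]
    _ = (4 * √(1 + 2 * ρ ^ 2) * ((1 - ρ * u) ^ 4 * √(1 + 2 * u ^ 2))) ^ 2 := by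
      rw [mul_pow, mul_pow, mul_pow, hsρ, hsu]
      ring

/-- `W_ρ` attains its global maximum over the closed unit disk at `(ρ, 0)` and only there,
with the stated maximal value. -/
theorem W_rho_global_max (ρ : ℝ) (hρ : ρ ∈ Set.Ioo (0 : ℝ) 1) :
    (∀ ξ ∈ closedBall (0 : ℂ) 1, ξ ≠ (ρ : ℂ) → Wfun ρ ξ < Wfun ρ (ρ : ℂ)) ∧
    Wfun ρ (ρ : ℂ) =
      4 * (ρ ^ 2 - 1) ^ 2 * Real.sqrt (4 * ρ * (ρ ^ 3 + ρ) + 1) /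
        (Real.sqrt (2 * ρ ^ 2 + 1) * (ρ ^ 4 - 2 * ρ ^ 2 + 1) ^ 2) := by
  obtain ⟨hρ0, hρ1⟩ := hρ
  have hmax : Wfun ρ ρ = radialProfile ρ ρ := Wfun_ofReal hρ0.le hρ0.le (by nlinarith)
  refine ⟨fun ξ hξ hne => ?_, ?_⟩
  · rw [mem_closedBall_zero_iff] at hξ
    have hρξ : ρ * ‖ξ‖ < 1 := by nlinarith [norm_nonneg ξ]
    rcases ne_or_eq ‖ξ‖ ρ with hr | hr
    · calc Wfun ρ ξ ≤ radialProfile ρ ‖ξ‖ := Wfun_le_radialProfile hρ0.le hρξ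
        _ < Wfun ρ ρ := hmax ▸ radialProfile_lt_self hρ0 hρ1 (norm_nonneg ξ) hξ hr
    · have hξ0 : ¬0 ≤ ξ := fun h => hne (by rw [← Complex.norm_of_nonneg' h, hr])
      calc Wfun ρ ξ < radialProfile ρ ‖ξ‖ := Wfun_lt_radialProfile hρ0 hρξ (hr ▸ hρ1) hξ0
        _ = Wfun ρ ρ := by rw [hr, hmax]
  · have hρ2 : 1 - ρ ^ 2 ≠ 0 := by nlinarith
    rw [hmax, radialProfile_self (by nlinarith : ρ ^ 2 < 1).ne,
      show 4 * ρ * (ρ ^ 3 + ρ) + 1 = (1 + 2 * ρ ^ 2) ^ 2 by ring, Real.sqrt_sq (by positivity),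
      show 2 * ρ ^ 2 + 1 = 1 + 2 * ρ ^ 2 by ring, show ρ ^ 4 - 2 * ρ ^ 2 + 1 = (1 - ρ ^ 2) ^ 2 by ring,
      show (ρ ^ 2 - 1) ^ 2 = (1 - ρ ^ 2) ^ 2 by ring]
    field_simp
    rw [Real.sq_sqrt (by positivity)]
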